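/- arXiv:2503.02545 — 6 statements merged into one kernel-verified Lean document; each statement's English description precedes it below -/
import Mathlib

section
/- Let A_t and B_t be two strictly increasing subsequences of {1,...,n} of equal length m, viewed as transmission patterns (the surviving bit positions). Let Δ be the set of indices i ∈ {1,...,m} at which the i-th elements of A_t and B_t differ. For X chosen uniformly at random from {0,1}^n, the probability that the subsequence of X indexed by A_t equals the subsequence of X indexed by B_t is at most 2^{-|Δ|}. -/
/-- For two transmission patterns `A, B` (strictly increasing length-`m` subsequences
of `{1,…,n}`) with index-discrepancy set `Δ`, the probability over uniform
`X ∈ {0,1}^n` that the two subsequences of `X` agree is at most `2^{-|Δ|}`. -/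
theorem stmt_1 {n m : ℕ} (A B : Fin m → Fin n) (hA : StrictMono A) (hB : StrictMono B) :
    (Nat.card {X : Fin n → Bool // ∀ i, X (A i) = X (B i)} : ℝ) / 2 ^ n
      ≤ (1 / 2 : ℝ) ^ (Finset.univ.filter (fun i => A i ≠ B i)).card := by
  classical
  set Δ : Finset (Fin m) := Finset.univ.filter (fun i => A i ≠ B i) with hΔ
  set f : Fin m → Fin n := fun i => max (A i) (B i) with hf
  have hfmono : StrictMono f := fun i j h => max_lt_max (hA h) (hB h)
  set S : Finset (Fin n) := Δ.image f with hS
  have hScard : S.card = Δ.card := Finset.card_image_of_injective _ hfmono.injective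
  have hinj : Function.Injective (fun (X : {X : Fin n → Bool // ∀ i, X (A i) = X (B i)}) =>
      (fun j : {j : Fin n // j ∉ S} => X.1 j.1)) := by
    intro X Y hXY
    have key : ∀ N : ℕ, ∀ j : Fin n, j.val = N → X.1 j = Y.1 j := by
      intro N
      induction N using Nat.strong_induction_on with
      | _ N ih =>
        intro j hj
        by_cases hjS : j ∈ S
        · obtain ⟨i, hiΔ, hij⟩ := Finset.mem_image.mp hjS
          have hne : A i ≠ B i := by
            have := Finset.mem_filter.mp hiΔ
            exact this.2
          set k := min (A i) (B i) with hk
          have hkj : k < j := by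
            rw [← hij]; exact min_lt_max.mpr hne
          have hXk : X.1 k = X.1 j := by
            have hfi : f i = max (A i) (B i) := rfl
            rw [← hij, hfi]
            rcases le_total (A i) (B i) with h | h
            · rw [hk, min_eq_left h, max_eq_right h]; exact X.2 i
            · rw [hk, min_eq_right h, max_eq_left h]; exact (X.2 i).symm
          have hYk : Y.1 k = Y.1 j := by
            have hfi : f i = max (A i) (B i) := rfl
            rw [← hij, hfi]
            rcases le_total (A i) (B i) with h | h
            · rw [hk, min_eq_left h, max_eq_right h]; exact Y.2 i
            · rw [hk, min_eq_right h, max_eq_left h]; exact (Y.2 i).symm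
          have hk' : X.1 k = Y.1 k := ih k.val (by omega) k rfl
          rw [← hXk, hk', hYk]
        · exact congrFun hXY ⟨j, hjS⟩
    exact Subtype.ext (funext fun j => key j.val j rfl)
  have hd : Δ.card ≤ n := by
    rw [← hScard]
    simpa using Finset.card_le_univ S
  have hcard : Nat.card {X : Fin n → Bool // ∀ i, X (A i) = X (B i)} ≤ 2 ^ (n - Δ.card) := by
    have h1 := Nat.card_le_card_of_injective (fun (X : {X : Fin n → Bool // ∀ i, X (A i) = X (B i)}) => (fun j : {j : Fin n // j ∉ S} => X.1 j.1)) hinj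
    have h2 : Nat.card ({j : Fin n // j ∉ S} → Bool) = 2 ^ (n - Δ.card) := by
      rw [Nat.card_eq_fintype_card, Fintype.card_fun, Fintype.card_bool]
      congr 1
      rw [Fintype.card_subtype]
      have : (Finset.univ.filter (fun j : Fin n => j ∉ S)) = Sᶜ := by
        ext j; simp
      rw [this, Finset.card_compl, hScard, Fintype.card_fin]
    exact h2 ▸ h1
  rw [div_le_iff₀ (by positivity)]
  have heq : (1 / 2 : ℝ) ^ Δ.card * 2 ^ n = 2 ^ (n - Δ.card) := by
    rw [one_div, inv_pow]
    rw [inv_mul_eq_div, div_eq_iff (by positivity), ← pow_add, Nat.sub_add_cancel hd]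
  rw [heq]
  exact_mod_cast hcard
end

section
/- Let A = (A_t, A_s) and B = (B_t, B_s) be two pattern pairs, where A_t, B_t are transmission patterns of common length m = n − q_d in {1,...,n} and A_s, B_s are substitution patterns (subsets of {1,...,m}) of common size q_s. Let Δ_t be the index-discrepancy set of A_t and B_t and let δ_s be the symmetric difference of A_s and B_s. If δ_s is not a subset of Δ_t, then for every X ∈ {0,1}^n, X_A ≠ X_B; otherwise, for X uniform on {0,1}^n, Pr[X_A = X_B] ≤ 2^{-|Δ_t|}. -/
/-- Applying a pattern pair `(At, As)` to `X ∈ {0,1}^n`: keep the bits at positions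
`At` and flip those whose index lies in `As`. -/
def applyPat {n m : ℕ} (At : Fin m → Fin n) (As : Finset (Fin m)) (X : Fin n → Bool) :
    Fin m → Bool := fun i => xor (X (At i)) (decide (i ∈ As))

/-- Collision probability of two deletion/substitution pattern pairs: if the
symmetric difference `δs` of the substitution patterns is not contained in the
transmission discrepancy set `Δt`, the outputs always differ; otherwise the
collision probability over uniform `X` is at most `2^{-|Δt|}`. -/
theorem stmt_2 {n q_d q_s : ℕ}
    (At Bt : Fin (n - q_d) → Fin n) (hAt : StrictMono At) (hBt : StrictMono Bt)
    (As Bs : Finset (Fin (n - q_d))) (hAs : As.card = q_s) (hBs : Bs.card = q_s) :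
    (¬ (symmDiff As Bs ⊆ Finset.univ.filter (fun i => At i ≠ Bt i)) →
      ∀ X : Fin n → Bool, applyPat At As X ≠ applyPat Bt Bs X) ∧
    ((symmDiff As Bs ⊆ Finset.univ.filter (fun i => At i ≠ Bt i)) →
      (Nat.card {X : Fin n → Bool // applyPat At As X = applyPat Bt Bs X} : ℝ) / 2 ^ n
        ≤ (1 / 2 : ℝ) ^ (Finset.univ.filter (fun i => At i ≠ Bt i)).card) := by
  set Δ := Finset.univ.filter (fun i => At i ≠ Bt i) with hΔ
  constructor
  · intro hns X hEq
    rw [Finset.not_subset] at hns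
    obtain ⟨i, hi, hni⟩ := hns
    have h1 : At i = Bt i := by
      by_contra h
      exact hni (by simp [hΔ, h])
    have h2 := congrFun hEq i
    simp only [applyPat, h1] at h2
    rw [Finset.mem_symmDiff] at hi
    rcases hi with ⟨hA, hB⟩ | ⟨hB, hA⟩ <;> simp [hA, hB] at h2
  · intro _
    set d := Δ.card with hd
    have hdn : d ≤ n := le_trans (le_trans (Finset.card_le_univ Δ) (by simp)) (Nat.sub_le n q_d)
    set T : Finset (Fin n) := Δ.image (fun i => max (At i) (Bt i)) with hT
    have hmono : ∀ i j : Fin (n - q_d), i < j →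
        max (At i) (Bt i) < max (At j) (Bt j) := by
      intro i j h
      exact max_lt (lt_of_lt_of_le (hAt h) (le_max_left _ _))
        (lt_of_lt_of_le (hBt h) (le_max_right _ _))
    have hinj : Set.InjOn (fun i => max (At i) (Bt i)) Δ := by
      intro i _ j _ hij
      by_contra hne
      rcases lt_or_gt_of_ne hne with h | h
      · exact absurd hij (ne_of_lt (hmono _ _ h))
      · exact absurd hij.symm (ne_of_lt (hmono _ _ h))
    have hTcard : T.card = d := Finset.card_image_of_injOn hinj
    have key : ∀ X Y : Fin n → Bool,
        applyPat At As X = applyPat Bt Bs X →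
        applyPat At As Y = applyPat Bt Bs Y →
        (∀ j : Fin n, j ∉ T → X j = Y j) → X = Y := by
      intro X Y hX hY hXY
      suffices h : ∀ v : ℕ, ∀ j : Fin n, j.val = v → X j = Y j by
        funext j; exact h j.val j rfl
      intro v
      induction v using Nat.strong_induction_on with
      | _ v IH =>
        intro j hj
        by_cases hjT : j ∈ T
        · obtain ⟨i, hiΔ, hmax⟩ := Finset.mem_image.mp hjT
          have hiAB : At i ≠ Bt i := (Finset.mem_filter.mp hiΔ).2
          have hXi := congrFun hX i
          have hYi := congrFun hY i
          simp only [applyPat] at hXi hYi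
          rcases lt_or_gt_of_ne hiAB with h | h
          · have hjeq : j = Bt i := by rw [← hmax]; exact max_eq_right h.le
            have hlt : ((At i : Fin n) : ℕ) < v := by rw [← hj, hjeq]; exact h
            have hA : X (At i) = Y (At i) := IH _ hlt _ rfl
            have eX : X (Bt i) = xor (xor (X (At i)) (decide (i ∈ As))) (decide (i ∈ Bs)) := by
              rw [hXi]; cases X (Bt i) <;> cases decide (i ∈ Bs) <;> simp
            have eY : Y (Bt i) = xor (xor (Y (At i)) (decide (i ∈ As))) (decide (i ∈ Bs)) := by
              rw [hYi]; cases Y (Bt i) <;> cases decide (i ∈ Bs) <;> simp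
            rw [hjeq, eX, eY, hA]
          · have hjeq : j = At i := by rw [← hmax]; exact max_eq_left h.le
            have hlt : ((Bt i : Fin n) : ℕ) < v := by rw [← hj, hjeq]; exact h
            have hB : X (Bt i) = Y (Bt i) := IH _ hlt _ rfl
            have eX : X (At i) = xor (xor (X (Bt i)) (decide (i ∈ Bs))) (decide (i ∈ As)) := by
              rw [← hXi]; cases X (At i) <;> cases decide (i ∈ As) <;> simp
            have eY : Y (At i) = xor (xor (Y (Bt i)) (decide (i ∈ Bs))) (decide (i ∈ As)) := by
              rw [← hYi]; cases Y (At i) <;> cases decide (i ∈ As) <;> simp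
            rw [hjeq, eX, eY, hB]
        · exact hXY j hjT
    have hcoll : Nat.card {X : Fin n → Bool // applyPat At As X = applyPat Bt Bs X}
        ≤ 2 ^ (n - d) := by
      have hle : Nat.card {X : Fin n → Bool // applyPat At As X = applyPat Bt Bs X}
          ≤ Nat.card ((Tᶜ : Finset (Fin n)) → Bool) := by
        apply Nat.card_le_card_of_injective (fun X j => X.1 j.1)
        intro X Y h
        apply Subtype.ext
        apply key _ _ X.2 Y.2
        intro j hj
        exact congrFun h ⟨j, Finset.mem_compl.mpr hj⟩
      have hcard : Nat.card ((Tᶜ : Finset (Fin n)) → Bool) = 2 ^ (n - d) := by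
        rw [Nat.card_eq_fintype_card, Fintype.card_fun]
        simp [Finset.card_compl, hTcard]
      rw [hcard] at hle
      exact hle
    have h2n : (0:ℝ) < 2 ^ n := by positivity
    rw [div_le_iff₀ h2n]
    calc (Nat.card {X : Fin n → Bool // applyPat At As X = applyPat Bt Bs X} : ℝ)
        ≤ ((2 ^ (n - d) : ℕ) : ℝ) := by exact_mod_cast hcoll
      _ = (1 / 2 : ℝ) ^ d * 2 ^ n := by
          push_cast
          rw [div_pow, one_pow]
          rw [div_mul_eq_mul_div, eq_div_iff (by positivity)]
          rw [← pow_add]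
          rw [Nat.sub_add_cancel hdn, one_mul]
end

section
/- With the setup of deletion/substitution pattern pairs, for any two pattern pairs A and B with index-discrepancy set Δ_t of the transmission parts, the probability over uniform X ∈ {0,1}^n that X_A = X_B is at most 2^{-|Δ_t|}, regardless of the substitution patterns. -/
/-- Regardless of the substitution patterns, the collision probability of two
pattern pairs over uniform `X ∈ {0,1}^n` is at most `2^{-|Δt|}`. -/
theorem stmt_3 {n q_d q_s : ℕ}
    (At Bt : Fin (n - q_d) → Fin n) (hAt : StrictMono At) (hBt : StrictMono Bt)
    (As Bs : Finset (Fin (n - q_d))) (hAs : As.card = q_s) (hBs : Bs.card = q_s) :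
    (Nat.card {X : Fin n → Bool // applyPat At As X = applyPat Bt Bs X} : ℝ) / 2 ^ n
      ≤ (1 / 2 : ℝ) ^ (Finset.univ.filter (fun i => At i ≠ Bt i)).card := by
  classical
  set Δ : Finset (Fin (n - q_d)) := Finset.univ.filter (fun i => At i ≠ Bt i) with hΔ
  set d := Δ.card with hd
  have hmax : StrictMono (fun i => max (At i) (Bt i)) := fun i j hij =>
    max_lt_max (hAt hij) (hBt hij)
  set M : Finset (Fin n) := Δ.image (fun i => max (At i) (Bt i)) with hM
  have hMcard : M.card = d := Finset.card_image_of_injective _ hmax.injective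
  have hdn : d ≤ n := by
    have := Finset.card_le_card (Finset.subset_univ M)
    simpa [hMcard] using this
  -- key: solutions agreeing off M are equal
  have key : ∀ (X Y : Fin n → Bool),
      applyPat At As X = applyPat Bt Bs X →
      applyPat At As Y = applyPat Bt Bs Y →
      (∀ p : Fin n, p ∉ M → X p = Y p) → X = Y := by
    intro X Y hX hY hagree
    have main : ∀ k : ℕ, ∀ p : Fin n, p.val < k → X p = Y p := by
      intro k
      induction k with
      | zero => intro p hp; omega
      | succ k ih =>
        intro p hp
        by_cases hpM : p ∈ M
        · obtain ⟨i, hiΔ, hip⟩ := Finset.mem_image.mp hpM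
          have hne : At i ≠ Bt i := (Finset.mem_filter.mp hiΔ).2
          have hXi := congrFun hX i
          have hYi := congrFun hY i
          simp only [applyPat] at hXi hYi
          rcases lt_or_gt_of_ne hne with h | h
          · -- At i < Bt i, so p = Bt i, min = At i
            have hpe : Bt i = p := by
              rw [← hip]; exact (max_eq_right h.le).symm
            have hmin : (At i).val < k := by
              have : (At i : Fin n) < p := hpe ▸ h
              omega
            have hXY : X (At i) = Y (At i) := ih _ hmin
            rw [hpe] at hXi hYi
            have : xor (X p) (decide (i ∈ Bs)) = xor (Y p) (decide (i ∈ Bs)) := by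
              rw [← hXi, ← hYi, hXY]
            cases hb : decide (i ∈ Bs) <;> simp [hb] at this <;> exact this
          · -- Bt i < At i, so p = At i, min = Bt i
            have hpe : At i = p := by
              rw [← hip]; exact (max_eq_left h.le).symm
            have hmin : (Bt i).val < k := by
              have : (Bt i : Fin n) < p := hpe ▸ h
              omega
            have hXY : X (Bt i) = Y (Bt i) := ih _ hmin
            rw [hpe] at hXi hYi
            have : xor (X p) (decide (i ∈ As)) = xor (Y p) (decide (i ∈ As)) := by
              rw [hXi, hYi, hXY]
            cases hb : decide (i ∈ As) <;> simp [hb] at this <;> exact this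
        · exact hagree p hpM
    funext p
    exact main n p p.isLt
  -- injection into functions on Mᶜ
  have hinj : Function.Injective
      (fun (X : {X : Fin n → Bool // applyPat At As X = applyPat Bt Bs X}) =>
        (fun p : (Mᶜ : Finset (Fin n)) => X.1 p.1)) := by
    intro X Y hXY
    ext p
    have := key X.1 Y.1 X.2 Y.2 (fun p hp => congrFun hXY ⟨p, Finset.mem_compl.mpr hp⟩)
    exact congrFun this p
  have hcard : Nat.card {X : Fin n → Bool // applyPat At As X = applyPat Bt Bs X}
      ≤ 2 ^ (n - d) := by
    have := Nat.card_le_card_of_injective _ hinj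
    have hcc : Nat.card ((Mᶜ : Finset (Fin n)) → Bool) = 2 ^ (n - d) := by
      rw [Nat.card_eq_fintype_card]
      simp [Finset.card_compl, hMcard]
    omega
  have h2n : (0:ℝ) < 2 ^ n := by positivity
  rw [div_le_iff₀ h2n]
  have heq : ((1:ℝ)/2) ^ d * 2 ^ n = 2 ^ (n - d) := by
    rw [div_pow, one_pow, div_mul_eq_mul_div, one_mul,
      div_eq_iff (by positivity : ((2:ℝ)^d) ≠ 0), ← pow_add]
    congr 1
    omega
  rw [heq]
  exact_mod_cast hcard
end

section
/- Fix a substitution pattern A_s ⊆ {1,...,m} with |A_s| = q_s ≥ 1, a set Δ ⊆ {1,...,m} with |Δ| = t', and an integer s ≥ 0. The number of subsets B_s ⊆ {1,...,m} of size q_s such that the symmetric difference of A_s and B_s is contained in Δ and has size at most s is at most (s+1) · C(q_s + s, q_s) · C(t' + s, s). -/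
/-!
A set `B` is determined by the pair `(A \ B, B \ A)`, and if `A ∆ B ⊆ Δ` has at most `s`
elements then these are subsets of `A` and of `Δ` with at most `s` elements each. A set of
size `n` has at most `C(n + s, s)` subsets of size at most `s`, since
`C(n, i) + C(n + i, i + 1) ≤ C(n + i, i) + C(n + i, i + 1) = C(n + i + 1, i + 1)`.
-/

open Finset

theorem Nat.sum_range_succ_choose_le_add_choose (n s : ℕ) :
    ∑ i ∈ range (s + 1), n.choose i ≤ (n + s).choose s := by
  induction s with
  | zero => simp
  | succ s ih =>
    calc ∑ i ∈ range (s + 2), n.choose i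
        = ∑ i ∈ range (s + 1), n.choose i + n.choose (s + 1) := sum_range_succ _ _
      _ ≤ (n + s).choose s + (n + s).choose (s + 1) := by gcongr; omega
      _ = (n + (s + 1)).choose (s + 1) := (Nat.choose_succ_succ (n + s) s).symm

namespace Finset

variable {α : Type*} [DecidableEq α]

theorem card_filter_powerset_card_le_le (A : Finset α) (s : ℕ) :
    #{S ∈ A.powerset | #S ≤ s} ≤ (#A + s).choose s :=
  calc #{S ∈ A.powerset | #S ≤ s}
      ≤ #((range (s + 1)).biUnion fun i ↦ A.powersetCard i) := by
        refine card_le_card fun S hS ↦ ?_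
        simp only [mem_filter, mem_powerset] at hS
        simpa [mem_powersetCard, Nat.lt_succ_iff] using hS.symm
    _ ≤ ∑ i ∈ range (s + 1), #(A.powersetCard i) := card_biUnion_le
    _ = ∑ i ∈ range (s + 1), (#A).choose i := by simp only [card_powersetCard]
    _ ≤ (#A + s).choose s := Nat.sum_range_succ_choose_le_add_choose _ _

theorem sdiff_prod_sdiff_injective (A : Finset α) :
    Function.Injective fun B : Finset α ↦ (A \ B, B \ A) := by
  have hB (B : Finset α) : B = A \ (A \ B) ∪ B \ A := by
    rw [sdiff_sdiff_self_left, inter_comm, union_comm, sdiff_union_inter]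
  intro B₁ B₂ h
  simp only [Prod.mk.injEq] at h
  rw [hB B₁, hB B₂, h.1, h.2]

theorem card_symmDiff_subset_card_le_le (A Δ : Finset α) (s : ℕ) :
    Nat.card {B : Finset α // symmDiff A B ⊆ Δ ∧ #(symmDiff A B) ≤ s}
      ≤ (#A + s).choose s * (#Δ + s).choose s := by
  let X := {S ∈ A.powerset | #S ≤ s} ×ˢ {S ∈ Δ.powerset | #S ≤ s}
  have hmaps (B : Finset α) (hB : symmDiff A B ⊆ Δ ∧ #(symmDiff A B) ≤ s) :
      (A \ B, B \ A) ∈ X := by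
    obtain ⟨hΔ, hs⟩ := hB
    rw [symmDiff_def, sup_eq_union] at hΔ hs
    simp only [X, mem_product, mem_filter, mem_powerset]
    exact ⟨⟨sdiff_subset, (card_le_card subset_union_left).trans hs⟩,
      (subset_union_right).trans hΔ, (card_le_card subset_union_right).trans hs⟩
  calc Nat.card {B : Finset α // symmDiff A B ⊆ Δ ∧ #(symmDiff A B) ≤ s}
      ≤ Nat.card X := Nat.card_le_card_of_injective
        (fun B ↦ ⟨(A \ B.1, B.1 \ A), hmaps B.1 B.2⟩)
        fun B₁ B₂ h ↦ Subtype.ext (sdiff_prod_sdiff_injective A (congrArg Subtype.val h))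
    _ = #{S ∈ A.powerset | #S ≤ s} * #{S ∈ Δ.powerset | #S ≤ s} := by
        rw [Nat.card_eq_finsetCard, card_product]
    _ ≤ (#A + s).choose s * (#Δ + s).choose s := by
        gcongr <;> exact card_filter_powerset_card_le_le _ _

end Finset

theorem stmt_5_general {m : ℕ} (A_s Δ : Finset (Fin m)) (q_s t' s : ℕ)
    (hA : A_s.card = q_s) (hΔ : Δ.card = t') :
    Nat.card {B_s : Finset (Fin m) // B_s.card = q_s ∧
        symmDiff A_s B_s ⊆ Δ ∧ (symmDiff A_s B_s).card ≤ s}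
      ≤ (s + 1) * Nat.choose (q_s + s) q_s * Nat.choose (t' + s) s := by
  calc Nat.card {B_s : Finset (Fin m) // B_s.card = q_s ∧
        symmDiff A_s B_s ⊆ Δ ∧ (symmDiff A_s B_s).card ≤ s}
      ≤ Nat.card {B : Finset (Fin m) // symmDiff A_s B ⊆ Δ ∧ (symmDiff A_s B).card ≤ s} :=
        Nat.card_le_card_of_injective (fun B ↦ ⟨B.1, B.2.2⟩)
          fun _ _ h ↦ Subtype.ext (Subtype.mk.inj h)
    _ ≤ (q_s + s).choose s * (t' + s).choose s := by
        simpa only [hA, hΔ] using Finset.card_symmDiff_subset_card_le_le A_s Δ s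
    _ = 1 * (q_s + s).choose q_s * (t' + s).choose s := by
        rw [Nat.choose_symm_add, one_mul]
    _ ≤ (s + 1) * (q_s + s).choose q_s * (t' + s).choose s := by
        gcongr; omega

/-- Counting substitution patterns with symmetric difference of size at most `s`:
the number of size-`q_s` subsets `B_s` of `{1,…,m}` whose symmetric difference with
`A_s` is contained in `Δ` and has size at most `s` is at most
`(s+1)·C(q_s+s, q_s)·C(t'+s, s)`. -/
theorem stmt_5 {m : ℕ} (A_s Δ : Finset (Fin m)) (q_s t' s : ℕ)
    (hq : 1 ≤ q_s) (hA : A_s.card = q_s) (hΔ : Δ.card = t') :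
    Nat.card {B_s : Finset (Fin m) // B_s.card = q_s ∧
        symmDiff A_s B_s ⊆ Δ ∧ (symmDiff A_s B_s).card ≤ s}
      ≤ (s + 1) * Nat.choose (q_s + s) q_s * Nat.choose (t' + s) s :=
  stmt_5_general A_s Δ q_s t' s hA hΔ
end

section
/- Fix n, q_d, q_s and a pattern pair A = (A_t, A_s) with |A_t| = n − q_d and |A_s| = q_s. For integers t ≥ 1 and s ≥ 1, the number of pattern pairs B = (B_t, B_s) whose transmission-part index-discrepancy with A has size at most t, whose substitution symmetric difference with A_s has size at most s and is contained in the transmission discrepancy set, is at most (s+1)(t+1) · C(q_s+s, q_s) · C(t+s, s) · C(q_d+t, q_d) · C(2q_d+t+1, 2q_d+1). -/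
/-!
Encode a pair `B` by its discrepancy set `D = {i | A_t i ≠ B_t i}`, the image `B_t '' D` and
`A_s ∆ B_s ⊆ D`. Once `D` is known, `B_t` is determined by `B_t '' D`, a `|D|`-subset of the at most
`q_d + |D|` positions left free by `A_t` off `D`, and `B_s` by `A_s ∆ B_s`.
The possible sets `D` are few: with `a i = A_t i - i` and `b i = B_t i - i` (monotone, at most `q_d`),
the discrepancies next to each of the `q_d` boundaries between consecutive levels of `a` form an
interval ending or starting at that boundary, so `D` is determined by `2 q_d` lengths of total `|D|`.
-/

open Finset
open scoped symmDiff

theorem card_le_choose_of_sum_le {ι : Type*} [Fintype ι] {S : ℕ}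
    (W : Finset (ι → ℕ)) (hW : ∀ w ∈ W, ∑ i, w i ≤ S) :
    #W ≤ (S + Fintype.card ι).choose (Fintype.card ι) := by
  classical
  -- stars and bars: pad `w` with the slack `S - ∑ w` to a function on `Option ι` of sum exactly `S`
  let pad : (ι → ℕ) → Option ι →₀ ℕ := fun w =>
    Finsupp.equivFunOnFinite.symm fun o => o.elim (S - ∑ i, w i) w
  calc #W ≤ #((univ : Finset (Option ι)).finsuppAntidiag S) := by
        refine card_le_card_of_injOn pad (fun w hw => ?_) fun w _ w' _ h => ?_
        · have := hW w hw
          rw [mem_coe, mem_finsuppAntidiag]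
          refine ⟨?_, subset_univ _⟩
          simp [pad, Fintype.sum_option]
          omega
        · funext i
          exact DFunLike.congr_fun h (some i)
    _ = (S + Fintype.card ι).choose (Fintype.card ι) := by
        rw [card_finsuppAntidiag_nat_eq_choose, card_univ, Fintype.card_option,
          show Fintype.card ι + 1 + S - 1 = S + Fintype.card ι by omega, Nat.choose_symm_add]

theorem sum_range_choose_le_add_choose (d : ℕ) :
    ∀ s, ∑ k ∈ range (s + 1), d.choose k ≤ (d + s).choose s
  | 0 => by simp
  | s + 1 => by
    rw [sum_range_succ, ← add_assoc, Nat.choose_succ_succ']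
    exact add_le_add (sum_range_choose_le_add_choose d s) (Nat.choose_le_choose _ (by omega))

theorem card_filter_powerset_card_le {α : Type*} (D : Finset α) (s : ℕ) :
    #{δ ∈ D.powerset | #δ ≤ s} ≤ (#D + s).choose s := by
  calc #{δ ∈ D.powerset | #δ ≤ s}
      = ∑ k ∈ range (s + 1), #{δ ∈ {δ ∈ D.powerset | #δ ≤ s} | #δ = k} :=
        card_eq_sum_card_fiberwise (f := card) fun δ hδ =>
          mem_range.2 (Nat.lt_succ_of_le (mem_filter.1 hδ).2)
    _ ≤ ∑ k ∈ range (s + 1), #(D.powersetCard k) := by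
        refine sum_le_sum fun k _ => card_le_card fun δ hδ => ?_
        simp only [mem_filter, mem_powerset] at hδ
        exact mem_powersetCard.2 ⟨hδ.1.1, hδ.2⟩
    _ ≤ (#D + s).choose s := by
        simp only [card_powersetCard]
        exact sum_range_choose_le_add_choose _ s

theorem card_filter_symmDiff_subset_le {α : Type*} [Fintype α] [DecidableEq α]
    (As D : Finset α) (s : ℕ) :
    #{S : Finset α | As ∆ S ⊆ D ∧ #(As ∆ S) ≤ s} ≤ (#D + s).choose s :=
  (card_le_card_of_injOn (As ∆ ·)
      (fun S hS => by simp only [coe_filter, Set.mem_ofPred_eq, mem_univ, true_and] at hS ⊢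
                      exact ⟨mem_powerset.2 hS.1, hS.2⟩)
      (symmDiff_right_injective As).injOn).trans
    (card_filter_powerset_card_le D s)

section StrictMonoFin

variable {m n : ℕ} {f : Fin m → Fin n}

theorem StrictMono.fin_val_sub_le_val_sub (hf : StrictMono f) {i j : Fin m} (hij : i ≤ j) :
    (j : ℕ) - i ≤ f j - f i := by
  have := card_le_card_of_injOn (s := Icc i j) (t := Icc (f i) (f j)) f (fun k hk => by
      simp only [coe_Icc, Set.mem_Icc] at hk ⊢; exact ⟨hf.monotone hk.1, hf.monotone hk.2⟩)
    hf.injective.injOn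
  simp only [Fin.card_Icc] at this
  omega

theorem StrictMono.fin_le_apply (hf : StrictMono f) (i : Fin m) : (i : ℕ) ≤ f i := by
  have := card_le_card_of_injOn (s := Iic i) (t := Iic (f i)) f (fun k hk => by
      simp only [coe_Iic, Set.mem_Iic] at hk ⊢; exact hf.monotone hk)
    hf.injective.injOn
  simpa only [Fin.card_Iic, add_le_add_iff_right] using this

theorem StrictMono.fin_apply_sub_le (hf : StrictMono f) (i : Fin m) : (f i : ℕ) - i ≤ n - m := by
  have := card_le_card_of_injOn (s := Ici i) (t := Ici (f i)) f (fun k hk => by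
      simp only [coe_Ici, Set.mem_Ici] at hk ⊢; exact hf.monotone hk)
    hf.injective.injOn
  simp only [Fin.card_Ici] at this
  omega

end StrictMonoFin

/-- For strictly monotone `f`, the number of positions of `Fin n` skipped before `f i`: for a
transmission pattern, the number of deletions before the `i`-th transmitted symbol. -/
def offset {m n : ℕ} (f : Fin m → Fin n) (i : Fin m) : ℕ := f i - i

section offset

variable {m n : ℕ} {f g : Fin m → Fin n}

theorem StrictMono.monotone_offset (hf : StrictMono f) : Monotone (offset f) := fun i j hij => by
  have := hf.fin_val_sub_le_val_sub hij
  have := hf.fin_le_apply i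
  have := hf.monotone hij
  simp only [offset, Fin.le_def] at *
  omega

theorem StrictMono.offset_le (hf : StrictMono f) (i : Fin m) : offset f i ≤ n - m :=
  hf.fin_apply_sub_le i

theorem filter_ne_eq_filter_offset_ne (hf : StrictMono f) (hg : StrictMono g) :
    univ.filter (fun i => f i ≠ g i) = univ.filter (fun i => offset f i ≠ offset g i) := by
  ext i
  have := hf.fin_le_apply i
  have := hg.fin_le_apply i
  simp only [mem_filter, mem_univ, true_and, ne_eq, Fin.ext_iff]
  unfold offset
  omega

end offset

section DiscrepancyProfile

variable {ι : Type*} [Fintype ι] {q : ℕ} {a b b' : ι → ℕ}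

/-- The discrepancies `a i ≠ b i` next to the boundary between the levels `c` and `c + 1` of `a`:
just below it (`inl c`, where `b` has risen past `c`) and just above it (`inr c`, where `b` has
stayed at or below `c`). -/
def discrepancyPiece (q : ℕ) (a b : ι → ℕ) : Fin q ⊕ Fin q → Finset ι
  | .inl c => {i | a i = c ∧ c < b i}
  | .inr c => {i | a i = c + 1 ∧ b i ≤ c}

def discrepancyProfile (q : ℕ) (a b : ι → ℕ) (k : Fin q ⊕ Fin q) : ℕ :=
  #(discrepancyPiece q a b k)

theorem Nat.ne_iff_exists_fin {x y : ℕ} (hx : x ≤ q) (hy : y ≤ q) :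
    x ≠ y ↔ (∃ c : Fin q, x = c ∧ c < y) ∨ ∃ c : Fin q, x = c + 1 ∧ y ≤ c := by
  constructor
  · intro h
    rcases Nat.lt_or_gt_of_ne h with h | h
    · exact .inl ⟨⟨x, by omega⟩, rfl, h⟩
    · exact .inr ⟨⟨x - 1, by omega⟩, by simp only; omega, by simp only; omega⟩
  · rintro (⟨c, rfl, h⟩ | ⟨c, rfl, h⟩) <;> omega

theorem biUnion_discrepancyPiece [DecidableEq ι] (ha : ∀ i, a i ≤ q) (hb : ∀ i, b i ≤ q) :
    univ.biUnion (discrepancyPiece q a b) = univ.filter (fun i => a i ≠ b i) := by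
  ext i
  simp only [mem_biUnion, mem_univ, true_and, mem_filter, Nat.ne_iff_exists_fin (ha i) (hb i),
    Sum.exists, discrepancyPiece]

theorem pairwiseDisjoint_discrepancyPiece :
    (↑(univ : Finset (Fin q ⊕ Fin q)) : Set _).PairwiseDisjoint (discrepancyPiece q a b) := by
  rintro (c | c) - (c' | c') - hne <;>
    simp only [Function.onFun, disjoint_left, discrepancyPiece, mem_filter, mem_univ,
      true_and] <;> intro i hi hi'
  · exact hne (congrArg Sum.inl (Fin.ext (by omega)))
  · omega
  · omega
  · exact hne (congrArg Sum.inr (Fin.ext (by omega)))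

theorem sum_discrepancyProfile (ha : ∀ i, a i ≤ q) (hb : ∀ i, b i ≤ q) :
    ∑ k, discrepancyProfile q a b k = #(univ.filter fun i => a i ≠ b i) := by
  classical
  rw [← biUnion_discrepancyPiece ha hb, card_biUnion pairwiseDisjoint_discrepancyPiece]
  rfl

theorem discrepancyPiece_subset_total [LinearOrder ι] (hb : Monotone b) (hb' : Monotone b')
    (k : Fin q ⊕ Fin q) :
    discrepancyPiece q a b k ⊆ discrepancyPiece q a b' k ∨
      discrepancyPiece q a b' k ⊆ discrepancyPiece q a b k := by
  cases k with
  | inl c =>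
    rcases (isUpperSet_Ioi (c : ℕ)).preimage hb |>.total ((isUpperSet_Ioi _).preimage hb') with
      h | h <;> [left; right] <;>
    · intro i hi
      simp only [discrepancyPiece, mem_filter] at hi ⊢
      exact ⟨hi.1, hi.2.1, h hi.2.2⟩
  | inr c =>
    rcases (isLowerSet_Iic (c : ℕ)).preimage hb |>.total ((isLowerSet_Iic _).preimage hb') with
      h | h <;> [left; right] <;>
    · intro i hi
      simp only [discrepancyPiece, mem_filter] at hi ⊢
      exact ⟨hi.1, hi.2.1, h hi.2.2⟩

/-- Each piece cuts a level set of `a` by an upper or a lower set of indices, so the pieces for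
monotone `b` and `b'` are nested and equal sizes force equal pieces. -/
theorem filter_ne_eq_of_discrepancyProfile_eq [LinearOrder ι] (ha : ∀ i, a i ≤ q) (hb : Monotone b)
    (hb' : Monotone b') (hbq : ∀ i, b i ≤ q) (hbq' : ∀ i, b' i ≤ q)
    (h : discrepancyProfile q a b = discrepancyProfile q a b') :
    univ.filter (fun i => a i ≠ b i) = univ.filter (fun i => a i ≠ b' i) := by
  rw [← biUnion_discrepancyPiece ha hbq, ← biUnion_discrepancyPiece ha hbq']
  refine biUnion_congr rfl fun k _ => ?_
  have hk := congrFun h k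
  rcases discrepancyPiece_subset_total hb hb' k with hs | hs
  · exact eq_of_subset_of_card_le hs hk.ge
  · exact (eq_of_subset_of_card_le hs hk.le).symm

end DiscrepancyProfile

theorem card_strictMono_eqOn_compl_le {m n : ℕ} {A : Fin m → Fin n} (hA : Function.Injective A)
    (D : Finset (Fin m)) :
    #(univ.filter fun f : Fin m → Fin n => StrictMono f ∧ ∀ i ∉ D, f i = A i)
      ≤ (n - m + #D).choose #D := by
  -- `f` is fixed by its range, which is `f '' D` together with the known part `A '' Dᶜ`
  have hrange : ∀ f : Fin m → Fin n, (∀ i ∉ D, f i = A i) →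
      Set.range f = ↑(D.image f ∪ Dᶜ.image A) := by
    intro f hfA
    ext y
    simp only [Set.mem_range, coe_union, coe_image, coe_compl, Set.mem_union, Set.mem_image,
      mem_coe, Set.mem_compl_iff]
    constructor
    · rintro ⟨i, rfl⟩
      by_cases hi : i ∈ D
      · exact .inl ⟨i, hi, rfl⟩
      · exact .inr ⟨i, hi, (hfA i hi).symm⟩
    · rintro (⟨i, -, rfl⟩ | ⟨i, hi, rfl⟩)
      exacts [⟨i, rfl⟩, ⟨i, hfA i hi⟩]
  calc _ ≤ #(powersetCard #D (Dᶜ.image A)ᶜ) := by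
        refine card_le_card_of_injOn (fun f => D.image f) (fun f hf => ?_) fun f hf g hg hfg => ?_
        · simp only [coe_filter, mem_univ, true_and, Set.mem_ofPred_eq] at hf
          refine mem_powersetCard.2 ⟨fun y hy => ?_, card_image_of_injective _ hf.1.injective⟩
          obtain ⟨i, hi, rfl⟩ := mem_image.1 hy
          rw [mem_compl, mem_image]
          rintro ⟨j, hj, hji⟩
          rw [← hf.2 j (mem_compl.1 hj)] at hji
          exact mem_compl.1 hj (hf.1.injective hji ▸ hi)
        · simp only [coe_filter, mem_univ, true_and, Set.mem_ofPred_eq] at hf hg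
          refine (hf.1.range_inj hg.1).1 ?_
          rw [hrange f hf.2, hrange g hg.2]
          exact congrArg (fun E => ((E ∪ Dᶜ.image A : Finset (Fin n)) : Set (Fin n))) hfg
    _ ≤ (n - m + #D).choose #D := by
        rw [card_powersetCard, card_compl, card_image_of_injective _ hA, card_compl,
          Fintype.card_fin, Fintype.card_fin]
        have := card_le_univ D
        rw [Fintype.card_fin] at this
        exact Nat.choose_le_choose _ (by omega)

theorem card_patternPairs_le {m n q : ℕ} (hq : n - m ≤ q) (t s : ℕ) {A : Fin m → Fin n}
    (hA : StrictMono A) (As : Finset (Fin m)) :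
    #(univ.filter fun B : (Fin m → Fin n) × Finset (Fin m) => StrictMono B.1 ∧
        #(univ.filter fun i => A i ≠ B.1 i) ≤ t ∧
        As ∆ B.2 ⊆ univ.filter (fun i => A i ≠ B.1 i) ∧ #(As ∆ B.2) ≤ s)
      ≤ (q + t).choose q * (t + s).choose s * (t + 2 * q).choose (2 * q) := by
  set P := univ.filter fun B : (Fin m → Fin n) × Finset (Fin m) => StrictMono B.1 ∧
        #(univ.filter fun i => A i ≠ B.1 i) ≤ t ∧
        As ∆ B.2 ⊆ univ.filter (fun i => A i ≠ B.1 i) ∧ #(As ∆ B.2) ≤ s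
  let profile (B : (Fin m → Fin n) × Finset (Fin m)) : Fin q ⊕ Fin q → ℕ :=
    discrepancyProfile q (offset A) (offset B.1)
  have hoffset {f : Fin m → Fin n} (hf : StrictMono f) (i : Fin m) : offset f i ≤ q :=
    (hf.offset_le i).trans hq
  have hfiber : ∀ w ∈ P.image profile,
      #{B ∈ P | profile B = w} ≤ (q + t).choose q * (t + s).choose s := by
    rintro _ hw
    obtain ⟨B₀, hB₀, rfl⟩ := mem_image.1 hw
    obtain ⟨hB₀mono, hB₀t, -⟩ := (mem_filter.1 hB₀).2
    set D := univ.filter fun i => A i ≠ B₀.1 i with hDdef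
    calc #{B ∈ P | profile B = profile B₀}
        ≤ #(univ.filter (fun f => StrictMono f ∧ ∀ i ∉ D, f i = A i) ×ˢ
            univ.filter (fun S => As ∆ S ⊆ D ∧ #(As ∆ S) ≤ s)) := by
          refine card_le_card fun B hB => ?_
          obtain ⟨hBP, hprof⟩ := mem_filter.1 hB
          obtain ⟨hBmono, -, hsub, hcard⟩ := (mem_filter.1 hBP).2
          have hD : univ.filter (fun i => A i ≠ B.1 i) = D := by
            rw [hDdef, filter_ne_eq_filter_offset_ne hA hBmono,
              filter_ne_eq_filter_offset_ne hA hB₀mono]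
            exact filter_ne_eq_of_discrepancyProfile_eq (hoffset hA) hBmono.monotone_offset
              hB₀mono.monotone_offset (hoffset hBmono) (hoffset hB₀mono) hprof
          rw [← hD]
          simp only [mem_product, mem_filter, mem_univ, true_and, not_not]
          exact ⟨⟨hBmono, fun i hi => hi.symm⟩, hsub, hcard⟩
      _ ≤ (n - m + #D).choose #D * (#D + s).choose s := by
          rw [card_product]
          exact Nat.mul_le_mul (card_strictMono_eqOn_compl_le hA.injective D)
            (card_filter_symmDiff_subset_le As D s)
      _ ≤ (q + t).choose q * (t + s).choose s := by
          refine Nat.mul_le_mul ?_ (Nat.choose_le_choose _ (by omega))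
          calc (n - m + #D).choose #D ≤ (q + #D).choose #D := Nat.choose_le_choose _ (by omega)
            _ = (q + #D).choose q := Nat.choose_symm_add.symm
            _ ≤ (q + t).choose q := Nat.choose_le_choose _ (by omega)
  have hsum : ∀ w ∈ P.image profile, ∑ k, w k ≤ t := by
    rintro _ hw
    obtain ⟨B, hB, rfl⟩ := mem_image.1 hw
    obtain ⟨hBmono, hBt, -⟩ := (mem_filter.1 hB).2
    rwa [sum_discrepancyProfile (hoffset hA) (hoffset hBmono),
      ← filter_ne_eq_filter_offset_ne hA hBmono]
  calc #P ≤ (q + t).choose q * (t + s).choose s * #(P.image profile) :=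
        card_le_mul_card_image P _ hfiber
    _ ≤ (q + t).choose q * (t + s).choose s * (t + 2 * q).choose (2 * q) := by
        gcongr
        simpa only [Fintype.card_sum, Fintype.card_fin, two_mul] using
          card_le_choose_of_sum_le _ hsum

theorem stmt_8_general {n q_d q_s : ℕ} (t s : ℕ)
    (At : Fin (n - q_d) → Fin n) (hAt : StrictMono At)
    (As : Finset (Fin (n - q_d))) :
    Nat.card {B : (Fin (n - q_d) → Fin n) × Finset (Fin (n - q_d)) //
        StrictMono B.1 ∧ B.2.card = q_s ∧
        (Finset.univ.filter (fun i => At i ≠ B.1 i)).card ≤ t ∧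
        symmDiff As B.2 ⊆ Finset.univ.filter (fun i => At i ≠ B.1 i) ∧
        (symmDiff As B.2).card ≤ s}
      ≤ (s + 1) * (t + 1) * Nat.choose (q_s + s) q_s * Nat.choose (t + s) s *
          Nat.choose (q_d + t) q_d * Nat.choose (2 * q_d + t + 1) (2 * q_d + 1) := by
  have hslack : 0 < (s + 1) * (t + 1) * (q_s + s).choose q_s :=
    Nat.mul_pos (by positivity) (Nat.choose_pos (by omega))
  calc _ ≤ (q_d + t).choose q_d * (t + s).choose s * (t + 2 * q_d).choose (2 * q_d) := by
        rw [Nat.card_eq_fintype_card, Fintype.card_subtype]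
        refine (card_le_card fun B hB => ?_).trans (card_patternPairs_le (by omega) t s hAt As)
        simp only [mem_filter, mem_univ, true_and] at hB ⊢
        exact ⟨hB.1, hB.2.2⟩
    _ ≤ (q_d + t).choose q_d * (t + s).choose s * (2 * q_d + t + 1).choose (2 * q_d + 1) := by
        refine Nat.mul_le_mul_left _ ?_
        rw [Nat.choose_succ_succ', add_comm t]
        exact Nat.le_add_right _ _
    _ ≤ _ := by
        refine (Nat.le_mul_of_pos_left _ hslack).trans_eq ?_
        ring

/-- Lemma 2: the number of pattern pairs `B = (B_t, B_s)` whose transmission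
discrepancy with `A_t` has size at most `t` and whose substitution symmetric
difference with `A_s` is contained in the discrepancy set and has size at most `s`
is at most `(s+1)(t+1)·C(q_s+s,q_s)·C(t+s,s)·C(q_d+t,q_d)·C(2q_d+t+1,2q_d+1)`. -/
theorem stmt_8 {n q_d q_s : ℕ} (t s : ℕ) (ht : 1 ≤ t) (hs : 1 ≤ s)
    (At : Fin (n - q_d) → Fin n) (hAt : StrictMono At)
    (As : Finset (Fin (n - q_d))) (hAs : As.card = q_s) :
    Nat.card {B : (Fin (n - q_d) → Fin n) × Finset (Fin (n - q_d)) //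
        StrictMono B.1 ∧ B.2.card = q_s ∧
        (Finset.univ.filter (fun i => At i ≠ B.1 i)).card ≤ t ∧
        symmDiff As B.2 ⊆ Finset.univ.filter (fun i => At i ≠ B.1 i) ∧
        (symmDiff As B.2).card ≤ s}
      ≤ (s + 1) * (t + 1) * Nat.choose (q_s + s) q_s * Nat.choose (t + s) s *
          Nat.choose (q_d + t) q_d * Nat.choose (2 * q_d + t + 1) (2 * q_d + 1) :=
  stmt_8_general t s At hAt As
end

section
/- Suppose a codebook C ⊆ {0,1}^n of size N is used over a channel that applies a uniformly random pattern pair (deletion pattern of size q_d, substitution pattern of size q_s), and suppose there is a decoder whose probability (over uniform codeword and uniform pattern) of recovering the transmitted codeword is at least δ > 0. Then log₂ N ≤ n − q_d − log₂ C(n, q_d) − log₂ C(n−q_d, q_s) + log₂(2/δ) + log₂ α, where α = t²(2e)^{t−1}(5t/q_s)^{q_s}(5t/q_d)^{3q_d+1} and t = ⌈3 q_d log₂(ne/q_d) + 3 q_s log₂((n−q_d)e/q_s) + log₂(2/δ)⌉. -/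
open Real

lemma card_strictMonoMaps (m n : ℕ) :
    Nat.card {f : Fin m → Fin n // StrictMono f} = n.choose m := by
  have e : {f : Fin m → Fin n // StrictMono f} ≃ {s : Finset (Fin n) // s.card = m} :=
    { toFun := fun f => ⟨Finset.univ.map ⟨f.1, f.2.injective⟩, by simp⟩
      invFun := fun s => ⟨s.1.orderEmbOfFin s.2, (s.1.orderEmbOfFin s.2).strictMono⟩
      left_inv := fun f => by
        apply Subtype.ext
        exact (Finset.orderEmbOfFin_unique _ (fun x => by simp) f.2).symm
      right_inv := fun s => by
        apply Subtype.ext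
        apply Finset.coe_injective
        simp }
  rw [Nat.card_congr e, Nat.card_eq_fintype_card, Fintype.card_finset_len, Fintype.card_fin]

lemma choose_le_pow_exp (n k : ℕ) (hk : 1 ≤ k) :
    (n.choose k : ℝ) ≤ ((n : ℝ) * Real.exp 1 / k) ^ k := by
  have hk0 : (0:ℝ) < k := by exact_mod_cast hk
  have hf : (0:ℝ) < ((Nat.factorial k : ℕ) : ℝ) := by positivity
  have h2 : ((k:ℝ)) ^ k / ((Nat.factorial k : ℕ) : ℝ) ≤ Real.exp k :=
    Real.pow_div_factorial_le_exp (x := (k:ℝ)) (by positivity) k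
  have key : ((k:ℝ)) ^ k ≤ ((Nat.factorial k : ℕ) : ℝ) * Real.exp 1 ^ k := by
    rw [Real.exp_one_pow]
    rw [div_le_iff₀ hf] at h2
    linarith
  calc (n.choose k : ℝ) ≤ (n:ℝ) ^ k / ((Nat.factorial k : ℕ) : ℝ) := Nat.choose_le_pow_div k n
    _ ≤ ((n : ℝ) * Real.exp 1 / k) ^ k := by
        rw [div_pow, mul_pow, div_le_div_iff₀ hf (by positivity)]
        nlinarith [mul_le_mul_of_nonneg_left key (pow_nonneg (Nat.cast_nonneg n : (0:ℝ) ≤ n) k)]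

/-- Theorem 1: if a decoder succeeds with probability at least `δ` over a uniform
codeword and a uniform pattern pair with `q_d` deletions and `q_s` substitutions,
then `log₂ N ≤ n − q_d − log₂ C(n,q_d) − log₂ C(n−q_d,q_s) + log₂ (2/δ) + log₂ α`,
where `α = t²(2e)^{t−1}(5t/q_s)^{q_s}(5t/q_d)^{3q_d+1}` and
`t = ⌈3q_d log₂(ne/q_d) + 3q_s log₂((n−q_d)e/q_s) + log₂(2/δ)⌉`. -/
theorem stmt_10 (n q_d q_s : ℕ) (hqd : 1 ≤ q_d) (hqs : 1 ≤ q_s) (hn : q_d + q_s ≤ n)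
    (C : Finset (Fin n → Bool)) (hC : C.Nonempty)
    (δ : ℝ) (hδ : 0 < δ)
    (R : (Fin (n - q_d) → Bool) → (Fin n → Bool)) (hR : ∀ y, R y ∈ C)
    (hsucc : δ ≤
      (Nat.card {p : (Fin n → Bool) × ((Fin (n - q_d) → Fin n) × Finset (Fin (n - q_d))) //
          p.1 ∈ C ∧ StrictMono p.2.1 ∧ p.2.2.card = q_s ∧
          R (applyPat p.2.1 p.2.2 p.1) = p.1} : ℝ) /
        ((C.card : ℝ) * Nat.choose n q_d * Nat.choose (n - q_d) q_s))
    (t : ℕ) (α : ℝ)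
    (ht : t = ⌈3 * (q_d : ℝ) * logb 2 ((n : ℝ) * Real.exp 1 / q_d)
        + 3 * (q_s : ℝ) * logb 2 (((n : ℝ) - q_d) * Real.exp 1 / q_s)
        + logb 2 (2 / δ)⌉₊)
    (hα : α = (t : ℝ) ^ 2 * (2 * Real.exp 1) ^ (t - 1)
        * (5 * (t : ℝ) / q_s) ^ q_s * (5 * (t : ℝ) / q_d) ^ (3 * q_d + 1)) :
    logb 2 (C.card : ℝ) ≤ (n : ℝ) - q_d - logb 2 (Nat.choose n q_d : ℝ)
      - logb 2 (Nat.choose (n - q_d) q_s : ℝ) + logb 2 (2 / δ) + logb 2 α := by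
  have hqdn : q_d ≤ n := by omega
  have hqsm : q_s ≤ n - q_d := by omega
  -- counting
  have hSM : Nat.card {f : Fin (n - q_d) → Fin n // StrictMono f} = n.choose q_d := by
    rw [card_strictMonoMaps, Nat.choose_symm hqdn]
  have hsub : Nat.card {s : Finset (Fin (n - q_d)) // s.card = q_s}
      = (n - q_d).choose q_s := by
    rw [Nat.card_eq_fintype_card, Fintype.card_finset_len, Fintype.card_fin]
  have hup : Nat.card {p : (Fin n → Bool) × ((Fin (n - q_d) → Fin n) × Finset (Fin (n - q_d))) //
          p.1 ∈ C ∧ StrictMono p.2.1 ∧ p.2.2.card = q_s ∧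
          R (applyPat p.2.1 p.2.2 p.1) = p.1}
      ≤ n.choose q_d * ((n - q_d).choose q_s * 2 ^ (n - q_d)) := by
    have hinj : Function.Injective
        (fun p : {p : (Fin n → Bool) × ((Fin (n - q_d) → Fin n) × Finset (Fin (n - q_d))) //
          p.1 ∈ C ∧ StrictMono p.2.1 ∧ p.2.2.card = q_s ∧
          R (applyPat p.2.1 p.2.2 p.1) = p.1} =>
        ((⟨p.1.2.1, p.2.2.1⟩ : {f : Fin (n - q_d) → Fin n // StrictMono f}),
         (⟨p.1.2.2, p.2.2.2.1⟩ : {s : Finset (Fin (n - q_d)) // s.card = q_s}),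
         applyPat p.1.2.1 p.1.2.2 p.1.1)) := by
      intro p q h
      have h1 : p.1.2.1 = q.1.2.1 := congrArg (fun x => x.1.1) h
      have h2 : p.1.2.2 = q.1.2.2 := congrArg (fun x => x.2.1.1) h
      have h3 : applyPat p.1.2.1 p.1.2.2 p.1.1 = applyPat q.1.2.1 q.1.2.2 q.1.1 :=
        congrArg (fun x => x.2.2) h
      have h0 : p.1.1 = q.1.1 := by rw [← p.2.2.2.2, ← q.2.2.2.2, h3]
      exact Subtype.ext (Prod.ext h0 (Prod.ext h1 h2))
    calc Nat.card _ ≤ Nat.card ({f : Fin (n - q_d) → Fin n // StrictMono f} ×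
          {s : Finset (Fin (n - q_d)) // s.card = q_s} × (Fin (n - q_d) → Bool)) :=
        Nat.card_le_card_of_injective _ hinj
      _ = n.choose q_d * ((n - q_d).choose q_s * 2 ^ (n - q_d)) := by
        rw [Nat.card_prod, Nat.card_prod, hSM, hsub, Nat.card_eq_fintype_card]
        simp
  have hle : Nat.card {p : (Fin n → Bool) × ((Fin (n - q_d) → Fin n) × Finset (Fin (n - q_d))) //
          p.1 ∈ C ∧ StrictMono p.2.1 ∧ p.2.2.card = q_s ∧
          R (applyPat p.2.1 p.2.2 p.1) = p.1}
      ≤ C.card * (n.choose q_d * (n - q_d).choose q_s) := by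
    have hinj : Function.Injective
        (fun p : {p : (Fin n → Bool) × ((Fin (n - q_d) → Fin n) × Finset (Fin (n - q_d))) //
          p.1 ∈ C ∧ StrictMono p.2.1 ∧ p.2.2.card = q_s ∧
          R (applyPat p.2.1 p.2.2 p.1) = p.1} =>
        ((⟨p.1.1, p.2.1⟩ : {x // x ∈ C}),
         (⟨p.1.2.1, p.2.2.1⟩ : {f : Fin (n - q_d) → Fin n // StrictMono f}),
         (⟨p.1.2.2, p.2.2.2.1⟩ : {s : Finset (Fin (n - q_d)) // s.card = q_s}))) := by
      intro p q h
      have h0 : p.1.1 = q.1.1 := congrArg (fun x => x.1.1) h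
      have h1 : p.1.2.1 = q.1.2.1 := congrArg (fun x => x.2.1.1) h
      have h2 : p.1.2.2 = q.1.2.2 := congrArg (fun x => x.2.2.1) h
      exact Subtype.ext (Prod.ext h0 (Prod.ext h1 h2))
    calc Nat.card _ ≤ Nat.card ({x // x ∈ C} × {f : Fin (n - q_d) → Fin n // StrictMono f} ×
          {s : Finset (Fin (n - q_d)) // s.card = q_s}) := Nat.card_le_card_of_injective _ hinj
      _ = C.card * (n.choose q_d * (n - q_d).choose q_s) := by
        rw [Nat.card_prod, Nat.card_prod, hSM, hsub, Nat.card_eq_fintype_card,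
          Fintype.card_coe]
  -- positivity facts
  have hCd : (0:ℝ) < n.choose q_d := by exact_mod_cast Nat.choose_pos hqdn
  have hCs : (0:ℝ) < (n - q_d).choose q_s := by exact_mod_cast Nat.choose_pos hqsm
  have hNpos : (0:ℝ) < C.card := by exact_mod_cast hC.card_pos
  have hden : (0:ℝ) < (C.card : ℝ) * n.choose q_d * (n - q_d).choose q_s :=
    mul_pos (mul_pos hNpos hCd) hCs
  -- δ ≤ 1
  have hδ1 : δ ≤ 1 := by
    refine hsucc.trans (div_le_one_of_le₀ ?_ hden.le)
    have h : (Nat.card {p : (Fin n → Bool) × ((Fin (n - q_d) → Fin n) × Finset (Fin (n - q_d))) //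
          p.1 ∈ C ∧ StrictMono p.2.1 ∧ p.2.2.card = q_s ∧
          R (applyPat p.2.1 p.2.2 p.1) = p.1} : ℝ)
        ≤ ((C.card * (n.choose q_d * (n - q_d).choose q_s) : ℕ) : ℝ) := by
      exact_mod_cast hle
    push_cast at h
    linarith
  -- N ≤ 2^(n - q_d) / δ
  have hkey : (C.card : ℝ) ≤ 2 ^ (n - q_d) / δ := by
    rw [le_div_iff₀ hδ]
    have h1 : δ * ((C.card : ℝ) * n.choose q_d * (n - q_d).choose q_s) ≤
        (Nat.card {p : (Fin n → Bool) × ((Fin (n - q_d) → Fin n) × Finset (Fin (n - q_d))) //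
          p.1 ∈ C ∧ StrictMono p.2.1 ∧ p.2.2.card = q_s ∧
          R (applyPat p.2.1 p.2.2 p.1) = p.1} : ℝ) :=
      (le_div_iff₀ hden).mp hsucc
    have h2 : (Nat.card {p : (Fin n → Bool) × ((Fin (n - q_d) → Fin n) × Finset (Fin (n - q_d))) //
          p.1 ∈ C ∧ StrictMono p.2.1 ∧ p.2.2.card = q_s ∧
          R (applyPat p.2.1 p.2.2 p.1) = p.1} : ℝ)
        ≤ ((n.choose q_d * ((n - q_d).choose q_s * 2 ^ (n - q_d)) : ℕ) : ℝ) := by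
      exact_mod_cast hup
    push_cast at h2
    have h3 : (C.card : ℝ) * δ * ((n.choose q_d : ℝ) * ((n - q_d).choose q_s : ℝ)) ≤
        2 ^ (n - q_d) * ((n.choose q_d : ℝ) * ((n - q_d).choose q_s : ℝ)) := by linarith
    exact le_of_mul_le_mul_right h3 (mul_pos hCd hCs)
  -- log of key
  have h3' : logb 2 (2 / δ) = 1 - logb 2 δ := by
    rw [Real.logb_div (by norm_num) (ne_of_gt hδ),
      Real.logb_self_eq_one (by norm_num)]
  have hlogN : logb 2 (C.card : ℝ) ≤ ((n - q_d : ℕ) : ℝ) + logb 2 (2 / δ) - 1 := by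
    have h1 : logb 2 (C.card : ℝ) ≤ logb 2 ((2:ℝ) ^ (n - q_d) / δ) :=
      Real.logb_le_logb_of_le (by norm_num) hNpos hkey
    have h2 : logb 2 ((2:ℝ) ^ (n - q_d) / δ) = ((n - q_d : ℕ) : ℝ) - logb 2 δ := by
      rw [Real.logb_div (by positivity) (ne_of_gt hδ), Real.logb_pow,
        Real.logb_self_eq_one (by norm_num)]
      ring
    rw [h2] at h1
    linarith
  clear hup hle hsucc hR R hSM hsub
  -- α bound
  have hqd0 : (0:ℝ) < q_d := by exact_mod_cast hqd
  have hqs0 : (0:ℝ) < q_s := by exact_mod_cast hqs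
  have hnq : (q_d : ℝ) ≤ n := by exact_mod_cast hqdn
  have hnqs : (q_s : ℝ) ≤ (n : ℝ) - q_d := by
    have h : ((q_d + q_s : ℕ) : ℝ) ≤ ((n : ℕ) : ℝ) := by exact_mod_cast hn
    push_cast at h
    linarith
  have he : (2.7182818283 : ℝ) < Real.exp 1 := Real.exp_one_gt_d9
  have he2 : (2:ℝ) ≤ Real.exp 1 := by linarith
  have hX2 : (2:ℝ) ≤ (n : ℝ) * Real.exp 1 / q_d := by
    rw [le_div_iff₀ hqd0]
    have g1 : (2:ℝ) * q_d ≤ Real.exp 1 * q_d := mul_le_mul_of_nonneg_right he2 hqd0.le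
    have g2 : (q_d : ℝ) * Real.exp 1 ≤ (n : ℝ) * Real.exp 1 :=
      mul_le_mul_of_nonneg_right hnq (by linarith)
    linarith
  have hY2 : (2:ℝ) ≤ ((n : ℝ) - q_d) * Real.exp 1 / q_s := by
    rw [le_div_iff₀ hqs0]
    have g1 : (2:ℝ) * q_s ≤ Real.exp 1 * q_s := mul_le_mul_of_nonneg_right he2 hqs0.le
    have g2 : (q_s : ℝ) * Real.exp 1 ≤ ((n : ℝ) - q_d) * Real.exp 1 :=
      mul_le_mul_of_nonneg_right hnqs (by linarith)
    linarith
  have hXpos : (0:ℝ) < (n : ℝ) * Real.exp 1 / q_d := by linarith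
  have hYpos : (0:ℝ) < ((n : ℝ) - q_d) * Real.exp 1 / q_s := by linarith
  have hL1 : 1 ≤ logb 2 ((n : ℝ) * Real.exp 1 / q_d) :=
    calc (1:ℝ) = logb 2 2 := (Real.logb_self_eq_one (by norm_num)).symm
      _ ≤ _ := Real.logb_le_logb_of_le (by norm_num) (by norm_num) hX2
  have hL2 : 1 ≤ logb 2 (((n : ℝ) - q_d) * Real.exp 1 / q_s) :=
    calc (1:ℝ) = logb 2 2 := (Real.logb_self_eq_one (by norm_num)).symm
      _ ≤ _ := Real.logb_le_logb_of_le (by norm_num) (by norm_num) hY2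
  have hL3 : 1 ≤ logb 2 (2 / δ) :=
    calc (1:ℝ) = logb 2 2 := (Real.logb_self_eq_one (by norm_num)).symm
      _ ≤ _ := Real.logb_le_logb_of_le (by norm_num) (by norm_num)
        (by rw [le_div_iff₀ hδ]; linarith)
  have htR : 3 * (q_d : ℝ) * logb 2 ((n : ℝ) * Real.exp 1 / q_d)
      + 3 * (q_s : ℝ) * logb 2 (((n : ℝ) - q_d) * Real.exp 1 / q_s)
      + logb 2 (2 / δ) ≤ t := by
    rw [ht]
    exact Nat.le_ceil _
  have hA : (q_d : ℝ) ≤ (q_d : ℝ) * logb 2 ((n : ℝ) * Real.exp 1 / q_d) :=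
    le_mul_of_one_le_right hqd0.le hL1
  have hB : (q_s : ℝ) ≤ (q_s : ℝ) * logb 2 (((n : ℝ) - q_d) * Real.exp 1 / q_s) :=
    le_mul_of_one_le_right hqs0.le hL2
  have ht1R : (1:ℝ) ≤ t := by linarith
  have ht1 : 1 ≤ t := by exact_mod_cast ht1R
  have htqd : (q_d : ℝ) ≤ t := by linarith
  have htqs : (q_s : ℝ) ≤ t := by linarith
  -- 2^(t-1) ≥ Cd * Cs
  have hCdX : (n.choose q_d : ℝ) ≤ ((n : ℝ) * Real.exp 1 / q_d) ^ q_d :=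
    choose_le_pow_exp n q_d hqd
  have hCsY : ((n - q_d).choose q_s : ℝ) ≤ (((n : ℝ) - q_d) * Real.exp 1 / q_s) ^ q_s := by
    have h := choose_le_pow_exp (n - q_d) q_s hqs
    have hcast : (((n - q_d : ℕ)) : ℝ) = (n : ℝ) - q_d := by
      push_cast [Nat.cast_sub hqdn]
      ring
    rwa [hcast] at h
  have hXr : (2:ℝ) ^ ((q_d : ℝ) * logb 2 ((n : ℝ) * Real.exp 1 / q_d))
      = ((n : ℝ) * Real.exp 1 / q_d) ^ q_d := by
    rw [mul_comm, Real.rpow_mul (by norm_num),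
      Real.rpow_logb (by norm_num) (by norm_num) hXpos, Real.rpow_natCast]
  have hYr : (2:ℝ) ^ ((q_s : ℝ) * logb 2 (((n : ℝ) - q_d) * Real.exp 1 / q_s))
      = (((n : ℝ) - q_d) * Real.exp 1 / q_s) ^ q_s := by
    rw [mul_comm, Real.rpow_mul (by norm_num),
      Real.rpow_logb (by norm_num) (by norm_num) hYpos, Real.rpow_natCast]
  have hCdCs : (n.choose q_d : ℝ) * ((n - q_d).choose q_s : ℝ) ≤ (2:ℝ) ^ (t - 1) := by
    have e1 : (2:ℝ) ^ (t - 1) * 2 = (2:ℝ) ^ t := by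
      rw [← pow_succ]
      congr 1
      omega
    have e2 : ((2:ℝ) ^ t : ℝ) = (2:ℝ) ^ ((t:ℕ) : ℝ) := (Real.rpow_natCast 2 t).symm
    have e3 : (2:ℝ) ^ ((q_d : ℝ) * logb 2 ((n : ℝ) * Real.exp 1 / q_d)
          + (q_s : ℝ) * logb 2 (((n : ℝ) - q_d) * Real.exp 1 / q_s) + 1)
        ≤ (2:ℝ) ^ ((t:ℕ) : ℝ) := by
      apply Real.rpow_le_rpow_of_exponent_le (by norm_num)
      linarith
    rw [Real.rpow_add (by norm_num), Real.rpow_add (by norm_num), Real.rpow_one,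
      hXr, hYr] at e3
    have h4 : (n.choose q_d : ℝ) * ((n - q_d).choose q_s : ℝ) * 2
        ≤ ((n : ℝ) * Real.exp 1 / q_d) ^ q_d * (((n : ℝ) - q_d) * Real.exp 1 / q_s) ^ q_s * 2 := by
      have hx : (0:ℝ) ≤ ((n : ℝ) * Real.exp 1 / q_d) ^ q_d := by positivity
      have := mul_le_mul hCdX hCsY hCs.le hx
      linarith
    rw [← e2, ← e1] at e3
    linarith
  have hαge : (2:ℝ) ^ (t - 1) ≤ α := by
    rw [hα]
    have f1 : (1:ℝ) ≤ (t : ℝ) ^ 2 := one_le_pow₀ ht1R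
    have f2 : (2:ℝ) ^ (t - 1) ≤ (2 * Real.exp 1) ^ (t - 1) := by
      apply pow_le_pow_left₀ (by norm_num)
      linarith
    have f3 : (1:ℝ) ≤ (5 * (t : ℝ) / q_s) ^ q_s := by
      apply one_le_pow₀
      rw [le_div_iff₀ hqs0]
      linarith
    have f4 : (1:ℝ) ≤ (5 * (t : ℝ) / q_d) ^ (3 * q_d + 1) := by
      apply one_le_pow₀
      rw [le_div_iff₀ hqd0]
      linarith
    calc (2:ℝ) ^ (t - 1) = 1 * (2:ℝ) ^ (t - 1) * 1 * 1 := by ring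
      _ ≤ (t : ℝ) ^ 2 * (2 * Real.exp 1) ^ (t - 1)
          * (5 * (t : ℝ) / q_s) ^ q_s * (5 * (t : ℝ) / q_d) ^ (3 * q_d + 1) := by
        gcongr <;> first
          | exact f1 | exact f2 | exact f3 | exact f4 | positivity
  -- combine logs
  have hlogα : logb 2 (n.choose q_d : ℝ) + logb 2 ((n - q_d).choose q_s : ℝ) ≤ logb 2 α := by
    have h1 : logb 2 ((n.choose q_d : ℝ) * ((n - q_d).choose q_s : ℝ)) ≤ logb 2 α :=
      Real.logb_le_logb_of_le (by norm_num) (mul_pos hCd hCs) (hCdCs.trans hαge)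
    rwa [Real.logb_mul (ne_of_gt hCd) (ne_of_gt hCs)] at h1
  have hnm : ((n - q_d : ℕ) : ℝ) = (n : ℝ) - q_d := by
    push_cast [Nat.cast_sub hqdn]
    ring
  rw [← hnm]
  linarith
end
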